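/- arXiv:1609.05740 — 2 statements merged into one kernel-verified Lean document; each statement's English description precedes it below -/
import Mathlib

section
/- Let B be an n×n row-stochastic matrix that is irreducible. Then θ_{1,3} = exp(2πι/3) is an eigenvalue of B if and only if the directed graph associated with B is 3k-cyclic for some positive integer k, i.e., if and only if there exist a positive integer k and a partition of {1,…,n} into 3k nonempty sets V₀, V₁, …, V_{3k−1} such that B_{ij} ≠ 0 implies i ∈ V_l and j ∈ V_{(l+1) mod 3k} for some l. -/
open Matrix

/-- `theta p q = exp(2·π·ι·p/q)`, the `p`-th power of the primitive `q`-th root of unity. -/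
noncomputable def theta (p q : ℕ) : ℂ :=
  Complex.exp (2 * Real.pi * Complex.I * p / q)

/-- A real square matrix is row-stochastic if its entries are nonnegative and
every row sums to 1. -/
def RowStochastic {n : ℕ} (B : Matrix (Fin n) (Fin n) ℝ) : Prop :=
  (∀ i j, 0 ≤ B i j) ∧ ∀ i, ∑ j, B i j = 1

/-- A real square matrix is irreducible if its support digraph
(edge `(i,j)` whenever `B i j ≠ 0`) is strongly connected. -/
def IrreducibleMatrix {n : ℕ} (B : Matrix (Fin n) (Fin n) ℝ) : Prop :=
  ∀ i j : Fin n, Relation.ReflTransGen (fun a b => B a b ≠ 0) i j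

/-! If `B x = ζ x` with `|ζ| = 1` and `|x_{i₀}|` maximal, the row equation at `i₀` writes
`ζ x_{i₀}` as a convex combination of points of the closed disc of radius `|x_{i₀}|`. As
`ζ x_{i₀}` lies on the boundary circle, every point with positive weight equals it: `x_j = ζ x_{i₀}`
along each edge `i₀ → j`, and `|x_j|` is again maximal. By irreducibility every coordinate is
`ζ^l x_{i₀}`, and for a primitive `m`-th root `ζ` the exponent `l mod m` increases by one along
edges, i.e. it labels an `m`-cyclic partition. Conversely, a labelling `c` of the vertices by
`ZMod (3k)` increasing by one along edges yields the eigenvector `x_i = θ^{c i}` of `θ`, well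
defined because `θ^{3k} = 1`. -/

section

variable {ι : Type*}

theorem exists_cyclicPartition_iff {m : ℕ} (E : ι → ι → Prop) :
    (∃ V : ZMod m → Set ι, (∀ l, (V l).Nonempty) ∧ (∀ i, ∃! l, i ∈ V l) ∧
      ∀ i j, E i j → ∀ l, i ∈ V l → j ∈ V (l + 1)) ↔
    ∃ c : ι → ZMod m, Function.Surjective c ∧ ∀ i j, E i j → c j = c i + 1 := by
  constructor
  · rintro ⟨V, hne, huniq, hedge⟩
    choose c hc hcu using huniq
    refine ⟨c, fun l => ?_, fun i j hij => (hcu j _ (hedge i j hij _ (hc i))).symm⟩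
    obtain ⟨i, hi⟩ := hne l
    exact ⟨i, (hcu i l hi).symm⟩
  · rintro ⟨c, hsurj, hedge⟩
    refine ⟨fun l => c ⁻¹' {l}, hsurj, fun i => ⟨c i, rfl, fun l hl => hl.symm⟩, ?_⟩
    rintro i j hij _ rfl
    exact hedge i j hij

theorem ZMod.surjective_of_forall_exists_eq_add_one [Nonempty ι] {m : ℕ} [NeZero m]
    {c : ι → ZMod m} (h : ∀ i, ∃ j, c j = c i + 1) : Function.Surjective c := by
  obtain ⟨i₀⟩ := ‹Nonempty ι›
  have hreach : ∀ n : ℕ, ∃ j, c j = c i₀ + n := by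
    intro n
    induction n with
    | zero => exact ⟨i₀, by simp⟩
    | succ n ih =>
      obtain ⟨j, hj⟩ := ih
      obtain ⟨j', hj'⟩ := h j
      exact ⟨j', by rw [hj', hj]; push_cast; ring⟩
  intro l
  obtain ⟨j, hj⟩ := hreach (l - c i₀).val
  exact ⟨j, by rw [hj, ZMod.natCast_zmod_val, add_sub_cancel]⟩

variable [Fintype ι]

theorem Complex.eq_one_of_sum_mul_eq_one {p : ι → ℝ} {w : ι → ℂ}
    (hp : ∀ j, 0 ≤ p j) (hsum : ∑ j, p j = 1) (hw : ∀ j, ‖w j‖ ≤ 1)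
    (h : ∑ j, (p j : ℂ) * w j = 1) {j : ι} (hj : p j ≠ 0) : w j = 1 := by
  have hre : ∑ k, p k * (1 - (w k).re) = 0 := by
    have := congrArg Complex.re h
    simp only [Complex.re_sum, Complex.re_ofReal_mul, Complex.one_re] at this
    simp only [mul_sub, mul_one, Finset.sum_sub_distrib, hsum, this, sub_self]
  have hnonneg : ∀ k ∈ Finset.univ, 0 ≤ p k * (1 - (w k).re) := fun k _ =>
    mul_nonneg (hp k) (sub_nonneg.2 ((w k).re_le_norm.trans (hw k)))
  have hwj : (w j).re = 1 := by
    have := (Finset.sum_eq_zero_iff_of_nonneg hnonneg).1 hre j (Finset.mem_univ j)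
    linarith [(mul_eq_zero.1 this).resolve_left hj]
  have hnorm : ‖w j‖ = 1 := le_antisymm (hw j) (hwj ▸ (w j).re_le_norm)
  have hreal : w j = ‖w j‖ := RCLike.norm_le_re_iff_eq_norm.1 (hnorm.trans hwj.symm).le
  rw [hreal, hnorm, Complex.ofReal_one]

theorem eq_mul_of_mulVec_apply_eq_of_norm_le {B : Matrix ι ι ℝ}
    (hB : ∀ i j, 0 ≤ B i j) (hrow : ∀ i, ∑ j, B i j = 1) {x : ι → ℂ} {μ : ℂ}
    (hμ : ‖μ‖ = 1) {i : ι} (hx : (B.map Complex.ofReal *ᵥ x) i = μ * x i)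
    (hmax : ∀ j, ‖x j‖ ≤ ‖x i‖) {j : ι} (hij : B i j ≠ 0) : x j = μ * x i := by
  by_cases hxi : x i = 0
  · simpa [hxi] using hmax j
  have hμxi : μ * x i ≠ 0 := mul_ne_zero (by rintro rfl; simp at hμ) hxi
  rw [← div_eq_one_iff_eq hμxi]
  refine Complex.eq_one_of_sum_mul_eq_one (w := fun k => x k / (μ * x i)) (hB i) (hrow i)
    (fun k => ?_) ?_ hij
  · rw [norm_div, norm_mul, hμ, one_mul]
    exact div_le_one_of_le₀ (hmax k) (norm_nonneg _)
  · simp_rw [mul_div_assoc']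
    rw [← Finset.sum_div]
    exact (div_eq_one_iff_eq hμxi).2 hx

theorem mulVec_addChar_comp {m : ℕ} {B : Matrix ι ι ℝ}
    (hrow : ∀ i, ∑ j, B i j = 1) (ψ : AddChar (ZMod m) ℂ) {c : ι → ZMod m}
    (hc : ∀ i j, B i j ≠ 0 → c j = c i + 1) :
    B.map Complex.ofReal *ᵥ (ψ ∘ c) = ψ 1 • (ψ ∘ c) := by
  ext i
  have hterm : ∀ j, (B i j : ℂ) * ψ (c j) = B i j * (ψ 1 * ψ (c i)) := by
    intro j
    by_cases hij : B i j = 0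
    · simp [hij]
    · rw [hc i j hij, AddChar.map_add_eq_mul, mul_comm (ψ (c i))]
  calc (B.map Complex.ofReal *ᵥ (ψ ∘ c)) i = ∑ j, (B i j : ℂ) * ψ (c j) := rfl
    _ = (∑ j, (B i j : ℂ)) * (ψ 1 * ψ (c i)) := by
      rw [Finset.sum_congr rfl fun j _ => hterm j, Finset.sum_mul]
    _ = ψ 1 * ψ (c i) := by rw [← Complex.ofReal_sum, hrow i, Complex.ofReal_one, one_mul]

theorem exists_cyclicLabeling_of_mulVec_eq {m : ℕ} [NeZero m]
    {B : Matrix ι ι ℝ} (hB : ∀ i j, 0 ≤ B i j) (hrow : ∀ i, ∑ j, B i j = 1)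
    (hirr : ∀ i j, Relation.ReflTransGen (fun a b => B a b ≠ 0) i j) {ζ : ℂ}
    (hζ : IsPrimitiveRoot ζ m) {x : ι → ℂ} (hx0 : x ≠ 0)
    (hx : B.map Complex.ofReal *ᵥ x = ζ • x) :
    ∃ c : ι → ZMod m, Function.Surjective c ∧ ∀ i j, B i j ≠ 0 → c j = c i + 1 := by
  let ψ := AddChar.zmodChar m hζ.pow_eq_one
  have hψ1 : ψ 1 = ζ := by simpa using AddChar.zmodChar_apply' hζ.pow_eq_one 1
  have hψ : Function.Injective ψ := fun a b hab =>
    ZMod.val_injective m (hζ.pow_inj (ZMod.val_lt a) (ZMod.val_lt b) hab)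
  obtain ⟨j₀, hj₀⟩ := Function.ne_iff.1 hx0
  have : Nonempty ι := ⟨j₀⟩
  obtain ⟨i₀, hi₀⟩ := Finite.exists_max (‖x ·‖)
  have hxi₀ : x i₀ ≠ 0 := norm_pos_iff.1 ((norm_pos_iff.2 hj₀).trans_le (hi₀ j₀))
  have hstep : ∀ l i j, x i = ψ l * x i₀ → B i j ≠ 0 → x j = ψ (l + 1) * x i₀ := by
    intro l i j hi hij
    have hmax : ∀ k, ‖x k‖ ≤ ‖x i‖ := by
      rw [hi, norm_mul, AddChar.norm_apply, one_mul]
      exact hi₀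
    rw [eq_mul_of_mulVec_apply_eq_of_norm_le hB hrow (hζ.norm'_eq_one (NeZero.ne m))
      (congrFun hx i) hmax hij, hi, AddChar.map_add_eq_mul, hψ1]
    ring
  have hlabel : ∀ j, ∃ l, x j = ψ l * x i₀ := by
    intro j
    induction hirr i₀ j with
    | refl => exact ⟨0, by simp⟩
    | tail _ hbc ih =>
      obtain ⟨l, hl⟩ := ih
      exact ⟨l + 1, hstep l _ _ hl hbc⟩
  choose c hc using hlabel
  have hedge : ∀ i j, B i j ≠ 0 → c j = c i + 1 := fun i j hij =>
    hψ (mul_right_cancel₀ hxi₀ ((hc j).symm.trans (hstep _ i j (hc i) hij)))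
  have hsucc : ∀ i, ∃ j, c j = c i + 1 := by
    intro i
    obtain ⟨j, -, hij⟩ := Finset.exists_ne_zero_of_sum_ne_zero ((hrow i).trans_ne one_ne_zero)
    exact ⟨j, hedge i j hij⟩
  exact ⟨c, ZMod.surjective_of_forall_exists_eq_add_one hsucc, hedge⟩

end

theorem isPrimitiveRoot_theta_one_three : IsPrimitiveRoot (theta 1 3) 3 := by
  simpa [theta] using Complex.isPrimitiveRoot_exp 3 (by norm_num)

/-- for an irreducible row-stochastic `B`, `θ_{1,3}` is an eigenvalue of `B`
iff the digraph of `B` is `3k`-cyclic for some positive integer `k`, i.e. iff the vertices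
can be partitioned into `3k` nonempty sets `V₀, …, V_{3k-1}` such that every edge goes from
some `V_l` to `V_{(l+1) mod 3k}`. -/
theorem stmt2 {n : ℕ} (B : Matrix (Fin n) (Fin n) ℝ)
    (hrs : RowStochastic B) (hirr : IrreducibleMatrix B) :
    (∃ x : Fin n → ℂ, x ≠ 0 ∧ (B.map (Complex.ofReal)).mulVec x = theta 1 3 • x) ↔
    (∃ k : ℕ, 0 < k ∧ ∃ V : ZMod (3 * k) → Set (Fin n),
      (∀ l, (V l).Nonempty) ∧ (∀ i, ∃! l, i ∈ V l) ∧
      (∀ i j, B i j ≠ 0 → ∀ l, i ∈ V l → j ∈ V (l + 1))) := by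
  have hθ := isPrimitiveRoot_theta_one_three
  simp_rw [exists_cyclicPartition_iff]
  constructor
  · rintro ⟨x, hx0, hx⟩
    exact ⟨1, one_pos, exists_cyclicLabeling_of_mulVec_eq hrs.1 hrs.2 hirr hθ hx0 hx⟩
  · rintro ⟨k, hk, c, hc, hedge⟩
    have : NeZero (3 * k) := ⟨by positivity⟩
    have hθ3k : theta 1 3 ^ (3 * k) = 1 := by rw [pow_mul, hθ.pow_eq_one, one_pow]
    let ψ := AddChar.zmodChar (3 * k) hθ3k
    have hψ1 : ψ 1 = theta 1 3 := by simpa using AddChar.zmodChar_apply' hθ3k 1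
    obtain ⟨i, -⟩ := hc 0
    have hψc : ψ (c i) ≠ 0 := norm_ne_zero_iff.1 (by simp [AddChar.norm_apply])
    exact ⟨ψ ∘ c, Function.ne_iff.2 ⟨i, hψc⟩, hψ1 ▸ mulVec_addChar_comp hrs.2 ψ hedge⟩
end

section
/- Let B be an n×n row-stochastic matrix that is irreducible, and let x ∈ ℂⁿ be a nonzero vector with B x = θ_{1,3} x, where θ_{1,3} = exp(2πι/3). Then for every pair (i,j) with B_{ij} ≠ 0 one has x_j = θ_{1,3} x_i. Consequently, fixing any index i₀, the sets V_l = { i : x_i = θ_{l,3} x_{i₀} } for l = 0, 1, 2 partition {1,…,n}, and B_{ij} ≠ 0 implies that i ∈ V_l and j ∈ V_{(l+1) mod 3} for some l; that is, the entries of x cluster the vertices into the three groups of a 3-cyclic structure. -/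
open Matrix

/-! A row of `B x = μ x` with `|μ| = 1` writes `μ x_i` as a convex combination of the `x_k`.
Where `|x_i|` is maximal, strict convexity of the disc forces every `x_k` with `B_{ik} ≠ 0` to
equal `μ x_i`; so the maximum is attained again at such `k`, and by irreducibility it is
attained everywhere and `x_j = μ x_i` along every edge. Going around a walk, each `x_i` is
`μ^k x_{i₀}`, and for `μ = θ_{1,3}` only `k mod 3` matters. -/

open Finset

lemma theta_eq_pow (p q : ℕ) : theta p q = theta 1 q ^ p := by
  rw [theta, theta, ← Complex.exp_nat_mul]
  congr 1
  push_cast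
  ring

lemma norm_theta (p q : ℕ) : ‖theta p q‖ = 1 := by
  rw [theta, Complex.norm_exp]
  simp

lemma theta_isPrimitiveRoot {q : ℕ} (hq : q ≠ 0) : IsPrimitiveRoot (theta 1 q) q := by
  simpa [theta] using Complex.isPrimitiveRoot_exp q hq

lemma theta_one_mul_theta_val {q : ℕ} [NeZero q] (l : Fin q) :
    theta 1 q * theta l.val q = theta (l + 1 : Fin q).val q := by
  have hζ := theta_isPrimitiveRoot (NeZero.ne q)
  rw [theta_eq_pow l.val, theta_eq_pow (l + 1 : Fin q).val, Fin.val_add, Fin.val_one',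
    Nat.add_mod_mod, ← pow_eq_pow_mod _ hζ.pow_eq_one, pow_succ']

lemma existsUnique_fin_eq_theta_val_mul {q k : ℕ} [NeZero q] {a b : ℂ} (hb : b ≠ 0)
    (hab : a = theta 1 q ^ k * b) : ∃! l : Fin q, a = theta l.val q * b := by
  have hζ := theta_isPrimitiveRoot (NeZero.ne q)
  refine ⟨⟨k % q, Nat.mod_lt _ (NeZero.pos q)⟩, ?_, fun l hl => Fin.ext ?_⟩
  · show a = theta (k % q) q * b
    rw [hab, theta_eq_pow (k % q), ← pow_eq_pow_mod _ hζ.pow_eq_one]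
  · rw [hab, theta_eq_pow l.val] at hl
    refine hζ.pow_inj l.isLt (Nat.mod_lt _ (NeZero.pos q)) ?_
    rw [← pow_eq_pow_mod _ hζ.pow_eq_one]
    exact (mul_right_cancel₀ hb hl).symm

lemma eq_sum_smul_of_norm_sum_smul_eq {ι E : Type*} [NormedAddCommGroup E]
    [InnerProductSpace ℝ E] {s : Finset ι} {w : ι → ℝ} {z : ι → E} {r : ℝ} (hw₀ : ∀ k ∈ s, 0 ≤ w k)
    (hw₁ : ∑ k ∈ s, w k = 1) (hz : ∀ k ∈ s, ‖z k‖ ≤ r) (hsum : ‖∑ k ∈ s, w k • z k‖ = r)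
    {j : ι} (hj : j ∈ s) (hwj : w j ≠ 0) : z j = ∑ k ∈ s, w k • z k := by
  set p := ∑ k ∈ s, w k • z k
  have hinner : ∑ k ∈ s, w k * inner ℝ (z k) p = ‖p‖ ^ 2 := by
    rw [← real_inner_self_eq_norm_sq, sum_inner]
    simp_rw [real_inner_smul_left]
  have hnorm : ∑ k ∈ s, w k * ‖z k‖ ^ 2 ≤ ‖p‖ ^ 2 := calc
    ∑ k ∈ s, w k * ‖z k‖ ^ 2 ≤ ∑ k ∈ s, w k * r ^ 2 := sum_le_sum fun k hk =>
      mul_le_mul_of_nonneg_left (pow_le_pow_left₀ (norm_nonneg _) (hz k hk) 2) (hw₀ k hk)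
    _ = ‖p‖ ^ 2 := by rw [← sum_mul, hw₁, one_mul, hsum]
  -- `∑ w_k ‖z_k - p‖² = ∑ w_k ‖z_k‖² - ‖p‖²`, which is `≤ 0`
  have hvar : ∑ k ∈ s, w k * ‖z k - p‖ ^ 2 = 0 := by
    refine le_antisymm ?_ (sum_nonneg fun k hk => mul_nonneg (hw₀ k hk) (sq_nonneg _))
    simp_rw [norm_sub_sq_real, mul_add, mul_sub, sum_add_distrib, sum_sub_distrib, ← sum_mul, hw₁,
      mul_left_comm _ (2 : ℝ), ← mul_sum, hinner]
    linarith
  have hj0 := (sum_eq_zero_iff_of_nonneg fun k hk => mul_nonneg (hw₀ k hk) (sq_nonneg _)).1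
    hvar j hj
  simpa [hwj, sub_eq_zero] using hj0

lemma Relation.ReflTransGen.exists_eq_pow_mul {ι M : Type*} [Monoid M] {r : ι → ι → Prop}
    {x : ι → M} {μ : M} (hr : ∀ i j, r i j → x j = μ * x i) {i j : ι}
    (hij : Relation.ReflTransGen r i j) : ∃ k : ℕ, x j = μ ^ k * x i := by
  induction hij with
  | refl => exact ⟨0, by rw [pow_zero, one_mul]⟩
  | tail _ hjk ih =>
    obtain ⟨k, hk⟩ := ih
    exact ⟨k + 1, by rw [hr _ _ hjk, hk, pow_succ', mul_assoc]⟩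

namespace RowStochastic

variable {n : ℕ} {B : Matrix (Fin n) (Fin n) ℝ} {x : Fin n → ℂ} {μ : ℂ}

lemma eq_mul_of_forall_norm_le (hB : RowStochastic B) (hμ : ‖μ‖ = 1)
    (heig : (B.map Complex.ofReal).mulVec x = μ • x) {i : Fin n} (hi : ∀ k, ‖x k‖ ≤ ‖x i‖)
    {j : Fin n} (hij : B i j ≠ 0) : x j = μ * x i := by
  have hrow : ∑ k, B i k • x k = μ * x i := by
    simpa [mulVec, dotProduct, Complex.real_smul] using congrFun heig i
  rw [← hrow]
  refine eq_sum_smul_of_norm_sum_smul_eq (fun k _ => hB.1 i k) (hB.2 i) (fun k _ => hi k) ?_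
    (mem_univ j) hij
  rw [hrow, norm_mul, hμ, one_mul]

lemma eq_mul_of_ne_zero (hB : RowStochastic B) (hirr : IrreducibleMatrix B) (hμ : ‖μ‖ = 1)
    (heig : (B.map Complex.ofReal).mulVec x = μ • x) {i j : Fin n} (hij : B i j ≠ 0) :
    x j = μ * x i := by
  have : Nonempty (Fin n) := ⟨i⟩
  obtain ⟨m, hm⟩ := Finite.exists_max fun k => ‖x k‖
  have hmax : ∀ k l, ‖x l‖ ≤ ‖x k‖ := by
    intro k
    induction hirr m k with
    | refl => exact hm
    | tail _ hkl ih =>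
      rwa [eq_mul_of_forall_norm_le hB hμ heig ih hkl, norm_mul, hμ, one_mul]
  exact eq_mul_of_forall_norm_le hB hμ heig (hmax i) hij

end RowStochastic

/-- for a nonzero eigenvector `x` of an irreducible row-stochastic matrix `B`
with `B x = θ_{1,3} x`, every edge `(i,j)` (i.e. `B i j ≠ 0`) satisfies `x_j = θ_{1,3} x_i`;
consequently, for any fixed `i₀`, the sets `V_l = {i | x_i = θ_{l,3} x_{i₀}}`, `l = 0,1,2`,
partition the vertices, and every edge goes from some `V_l` to `V_{(l+1) mod 3}`. -/
theorem stmt5 {n : ℕ} (B : Matrix (Fin n) (Fin n) ℝ)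
    (hrs : RowStochastic B) (hirr : IrreducibleMatrix B)
    (x : Fin n → ℂ) (hx : x ≠ 0)
    (heig : (B.map Complex.ofReal).mulVec x = theta 1 3 • x) :
    (∀ i j, B i j ≠ 0 → x j = theta 1 3 * x i) ∧
    ∀ i₀ : Fin n,
      (∀ i, ∃! l : Fin 3, x i = theta l.val 3 * x i₀) ∧
      (∀ i j, B i j ≠ 0 → ∀ l : Fin 3, x i = theta l.val 3 * x i₀ →
        x j = theta ((l + 1) : Fin 3).val 3 * x i₀) := by
  have hedge : ∀ i j, B i j ≠ 0 → x j = theta 1 3 * x i := fun i j =>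
    hrs.eq_mul_of_ne_zero hirr (norm_theta 1 3) heig
  have hwalk (i₀ i : Fin n) : ∃ k : ℕ, x i = theta 1 3 ^ k * x i₀ :=
    (hirr i₀ i).exists_eq_pow_mul hedge
  refine ⟨hedge, fun i₀ => ⟨fun i => ?_, fun i j hij l hl => ?_⟩⟩
  · have hx₀ : x i₀ ≠ 0 := fun h => hx <| funext fun k => by
      obtain ⟨m, hm⟩ := hwalk i₀ k
      rw [hm, h, mul_zero, Pi.zero_apply]
    obtain ⟨k, hk⟩ := hwalk i₀ i
    exact existsUnique_fin_eq_theta_val_mul hx₀ hk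
  · rw [hedge i j hij, hl, ← mul_assoc, theta_one_mul_theta_val]
end
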